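/- Fix n ≥ 3 and let Γ ⊂ GL(n,ℝ) be the group of block matrices (A b; 0 1) with A ∈ GL(n−1,ℤ) and b ∈ ℤ^{n−1}. Then every nonzero x ∈ ℝⁿ has unbounded Γ-orbit, yet no element of Γ acts expansively on ℝⁿ (since 1 is an eigenvalue of every γ ∈ Γ). -/

import Mathlib

/-!
Transvections `1 + k E_{ij}` with `i` among the first `m` coordinates lie in `Γ`. For `x ≠ 0`
pick `q` with `x q ≠ 0` and `j ≠ q` (possible as `m ≥ 2`): the transvection in position
`(j, q)` sends `x` to `x + k x_q e_j`, so the orbit contains an unbounded arithmetic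
progression. Conversely every element of `Γ` has last row `eₙ`, so `γ - 1` is singular; a fixed
vector `v ≠ 0` of `γ` is fixed by all of `γᶻ`, and any neighbourhood of `0` contains some
`c • v ≠ 0`.
-/

open Matrix Sum Bornology Filter Topology

theorem not_isBounded_range_add_intCast_smul {E : Type*} [NormedAddCommGroup E]
    [NormedSpace ℝ E] (a : E) {c : E} (hc : c ≠ 0) :
    ¬ IsBounded (Set.range fun k : ℤ => a + (k : ℝ) • c) := by
  rw [isBounded_iff_forall_norm_le]
  rintro ⟨C, hC⟩
  obtain ⟨N, hN⟩ := exists_nat_gt ((C + ‖a‖) / ‖c‖)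
  have hbound : (N : ℝ) * ‖c‖ ≤ C + ‖a‖ := calc
    (N : ℝ) * ‖c‖ = ‖a + ((N : ℤ) : ℝ) • c - a‖ := by simp [norm_smul]
    _ ≤ ‖a + ((N : ℤ) : ℝ) • c‖ + ‖a‖ := norm_sub_le _ _
    _ ≤ C + ‖a‖ := by gcongr; exact hC _ ⟨N, rfl⟩
  rw [div_lt_iff₀ (norm_pos_iff.2 hc)] at hN
  linarith

theorem Matrix.transvection_mulVec {n R : Type*} [Fintype n] [DecidableEq n] [CommRing R]
    (i j : n) (c : R) (x : n → R) :
    transvection i j c *ᵥ x = x + (c * x j) • Pi.single i 1 := by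
  rw [transvection, add_mulVec, one_mulVec, single_mulVec_eq]

theorem exists_inl_ne {α β : Type*} [Nontrivial α] (q : α ⊕ β) : ∃ a : α, inl a ≠ q := by
  rcases q with i | _
  · obtain ⟨a, ha⟩ := exists_ne i
    exact ⟨a, by simpa using ha⟩
  · exact ⟨Classical.arbitrary α, inl_ne_inr⟩

theorem exists_smul_mem_of_mem_nhds_zero {E : Type*} [AddCommGroup E] [TopologicalSpace E]
    [Module ℝ E] [ContinuousSMul ℝ E] (v : E) {U : Set E} (hU : U ∈ 𝓝 0) :
    ∃ c : ℝ, c ≠ 0 ∧ c • v ∈ U := by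
  have hsmul : ∀ᶠ c in 𝓝 (0 : ℝ), c • v ∈ U :=
    (continuous_id.smul continuous_const).tendsto' 0 (0 : E) (zero_smul ℝ v) hU
  obtain ⟨c, hcU, hc⟩ :=
    ((hsmul.filter_mono (nhdsWithin_le_nhds (s := {0}ᶜ))).and self_mem_nhdsWithin).exists
  exact ⟨c, hc, hcU⟩

theorem Matrix.zpow_mulVec_eq_self {n K : Type*} [Fintype n] [DecidableEq n] [Field K]
    {M : Matrix n n K} (hM : IsUnit M.det) {v : n → K} (hv : M *ᵥ v = v) (k : ℤ) :
    (M ^ k) *ᵥ v = v := by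
  have hinv : M⁻¹ *ᵥ v = v := by
    conv_lhs => rw [← hv]
    rw [mulVec_mulVec, nonsing_inv_mul _ hM, one_mulVec]
  induction k using Int.induction_on with
  | zero => simp
  | succ k ih => rw [zpow_add_one hM, ← mulVec_mulVec, hv, ih]
  | pred k ih => rw [zpow_sub_one hM, ← mulVec_mulVec, hinv, ih]

def Matrix.IsExpansive {n : Type*} [Fintype n] [DecidableEq n] (M : Matrix n n ℝ) : Prop :=
  ∃ U ∈ 𝓝 (0 : n → ℝ), ∀ v : n → ℝ, (∀ k : ℤ, (M ^ k) *ᵥ v ∈ U) → v = 0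

theorem Matrix.not_isExpansive_of_det_sub_one_eq_zero {n : Type*} [Fintype n] [DecidableEq n]
    {M : Matrix n n ℝ} (hM : IsUnit M.det) (h1 : (M - 1).det = 0) : ¬ M.IsExpansive := by
  rintro ⟨U, hU, hexp⟩
  obtain ⟨v, hv0, hv⟩ := exists_mulVec_eq_zero_iff.2 h1
  rw [sub_mulVec, one_mulVec, sub_eq_zero] at hv
  obtain ⟨c, hc0, hcU⟩ := exists_smul_mem_of_mem_nhds_zero v hU
  have hfixed : ∀ k : ℤ, (M ^ k) *ᵥ (c • v) = c • v := fun k => by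
    rw [mulVec_smul, zpow_mulVec_eq_self hM hv]
  exact smul_ne_zero hc0 hv0 (hexp _ fun k => by rwa [hfixed k])

/-- The group `Γ` of the theorem; `of` turns the column block into a `Matrix` (definitionally
a no-op) so that the `fromBlocks` lemmas rewrite. -/
def affineIntegerMatrices (m : ℕ) : Set (Matrix (Fin m ⊕ Unit) (Fin m ⊕ Unit) ℝ) :=
  {M | ∃ (A : Matrix (Fin m) (Fin m) ℤ) (b : Fin m → ℤ), IsUnit A.det ∧
    M = fromBlocks (A.map (Int.cast : ℤ → ℝ)) (of fun i (_ : Unit) => (b i : ℝ)) 0 1}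

namespace affineIntegerMatrices

variable {m : ℕ}

theorem transvection_mem {j : Fin m} {q : Fin m ⊕ Unit} (hjq : inl j ≠ q) (k : ℤ) :
    transvection (inl j) q (k : ℝ) ∈ affineIntegerMatrices m := by
  rcases q with i | _
  · have hji : j ≠ i := fun h => hjq (congrArg inl h)
    refine ⟨transvection j i k, 0, by rw [det_transvection_of_ne _ _ hji]; exact isUnit_one, ?_⟩
    ext (a | a) (b | b) <;> simp [transvection, fromBlocks, one_apply, single]
  · refine ⟨1, Pi.single j k, by simp, ?_⟩
    ext (a | a) (b | b) <;>
      simp [transvection, fromBlocks, one_apply, single, Pi.single_apply, eq_comm]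

theorem isUnit_det {M : Matrix (Fin m ⊕ Unit) (Fin m ⊕ Unit) ℝ}
    (hM : M ∈ affineIntegerMatrices m) : IsUnit M.det := by
  obtain ⟨A, b, hA, rfl⟩ := hM
  rw [det_fromBlocks_zero₂₁, det_one, mul_one, ← Int.cast_det]
  exact hA.map (Int.castRingHom ℝ)

theorem det_sub_one_eq_zero {M : Matrix (Fin m ⊕ Unit) (Fin m ⊕ Unit) ℝ}
    (hM : M ∈ affineIntegerMatrices m) : (M - 1).det = 0 := by
  obtain ⟨A, b, -, rfl⟩ := hM
  refine det_eq_zero_of_row_eq_zero (inr ()) fun q => ?_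
  rcases q with i | _ <;> simp [fromBlocks, one_apply]

theorem not_isBounded_orbit (hm : 2 ≤ m) {x : Fin m ⊕ Unit → ℝ} (hx : x ≠ 0) :
    ¬ IsBounded {y | ∃ M ∈ affineIntegerMatrices m, y = M *ᵥ x} := by
  obtain ⟨q, hq⟩ := Function.ne_iff.1 hx
  have : Nontrivial (Fin m) := Fin.nontrivial_iff_two_le.2 hm
  obtain ⟨j, hjq⟩ := exists_inl_ne q
  refine fun hb => not_isBounded_range_add_intCast_smul x
    (c := x q • Pi.single (inl j) 1) (by simpa using hq) (hb.subset ?_)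
  rintro _ ⟨k, rfl⟩
  exact ⟨_, transvection_mem hjq k, by rw [transvection_mulVec, mul_smul]⟩

end affineIntegerMatrices

/-- Fix `n = m + 1 ≥ 3` and let `Γ ⊂ GL(n, ℝ)` be the group of block
matrices `(A b; 0 1)` with `A ∈ GL(m, ℤ)` and `b ∈ ℤᵐ` (indexing `ℝⁿ` by `Fin m ⊕ Unit`).
Then every nonzero `x ∈ ℝⁿ` has unbounded `Γ`-orbit, yet no element of `Γ` acts
expansively on `ℝⁿ` (expansiveness of a single invertible matrix `M` meaning that the
cyclic group `{Mᵏ : k ∈ ℤ}` acts expansively). -/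
theorem affine_integer_group_orbits_unbounded_but_no_expansive_element
    {m : ℕ} (hm : 2 ≤ m)
    (Γ : Set (Matrix (Fin m ⊕ Unit) (Fin m ⊕ Unit) ℝ))
    (hΓ : Γ = {M | ∃ (A : Matrix (Fin m) (Fin m) ℤ) (b : Fin m → ℤ), IsUnit A.det ∧
      M = Matrix.fromBlocks (A.map (Int.cast : ℤ → ℝ))
        (fun i (_ : Unit) => (b i : ℝ)) 0 1}) :
    (∀ x : Fin m ⊕ Unit → ℝ, x ≠ 0 →
        ¬ Bornology.IsBounded {y : Fin m ⊕ Unit → ℝ | ∃ M ∈ Γ, y = M *ᵥ x}) ∧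
      (∀ M ∈ Γ, ¬ ∃ U ∈ nhds (0 : Fin m ⊕ Unit → ℝ), ∀ v : Fin m ⊕ Unit → ℝ,
        (∀ k : ℤ, (M ^ k) *ᵥ v ∈ U) → v = 0) := by
  subst hΓ
  refine ⟨fun x hx => affineIntegerMatrices.not_isBounded_orbit hm hx, fun M hM => ?_⟩
  exact not_isExpansive_of_det_sub_one_eq_zero (affineIntegerMatrices.isUnit_det hM)
    (affineIntegerMatrices.det_sub_one_eq_zero hM)
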